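/- arXiv:1601.06529 — 2 statements merged into one kernel-verified Lean document; each statement's English description precedes it below -/
import Mathlib

section
/- Let f be strictly convex and continuous on [0,∞) with f(0) = f(1) = 0. For any two rank-one projections P, Q on a finite-dimensional complex Hilbert space, the Jensen f-divergence satisfies J_f(P,Q) = −( f(½(1 + √(tr PQ))) + f(½(1 − √(tr PQ))) ). -/
/-! Since the spectrum of a projection lies in `{0, 1}`, `f(P) = f(Q) = 0`, so
`J_f(P, Q) = -tr f(M)` with `M = (P + Q) / 2`. As `M` has rank at most two,
`tr g(M) = g(a) + g(b)` for every `g` with `g 0 = 0`, where `a, b` are eigenvalues of `M`.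
Taking `g = id` and `g = (·^2)` gives `a + b = tr M = 1` and
`a² + b² = tr M² = (1 + tr PQ) / 2`, hence `(a - b)² = tr PQ` and
`{a, b} = {(1 ± √tr PQ) / 2}`. -/

open Matrix
open scoped ComplexOrder

/-- Standard operator function: apply `f : ℝ → ℝ` to a Hermitian matrix via its
spectral decomposition (junk value `0` for non-Hermitian input). -/
noncomputable def matFun {n : ℕ} (f : ℝ → ℝ) (A : Matrix (Fin n) (Fin n) ℂ) :
    Matrix (Fin n) (Fin n) ℂ :=
  if hA : A.IsHermitian then
    (hA.eigenvectorUnitary : Matrix (Fin n) (Fin n) ℂ) *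
      Matrix.diagonal (fun i => (f (hA.eigenvalues i) : ℂ)) *
      (star (hA.eigenvectorUnitary : Matrix (Fin n) (Fin n) ℂ))
  else 0

/-- Bregman `f`-divergence `H_f(A,B) = tr (f(A) - f(B) - f'(B)(A-B))`. -/
noncomputable def bregman {n : ℕ} (f : ℝ → ℝ) (A B : Matrix (Fin n) (Fin n) ℂ) : ℝ :=
  ((matFun f A - matFun f B - matFun (deriv f) B * (A - B)).trace).re

/-- Jensen `f`-divergence `J_f(A,B) = tr (½(f(A)+f(B)) - f(½(A+B)))`. -/
noncomputable def jensen {n : ℕ} (f : ℝ → ℝ) (A B : Matrix (Fin n) (Fin n) ℂ) : ℝ :=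
  (((1/2 : ℂ) • (matFun f A + matFun f B) - matFun f ((1/2 : ℂ) • (A + B))).trace).re

/-- `P` is a rank-one (orthogonal) projection. -/
def IsRankOneProj {n : ℕ} (P : Matrix (Fin n) (Fin n) ℂ) : Prop :=
  P.IsHermitian ∧ P * P = P ∧ P.rank = 1

lemma cfc_eq_zero_of_isIdempotentElem {A : Type*} [Ring A] [StarRing A] [Algebra ℝ A]
    [TopologicalSpace A] [ContinuousFunctionalCalculus ℝ A IsSelfAdjoint]
    {p : A} (hp : IsIdempotentElem p) {f : ℝ → ℝ} (hf0 : f 0 = 0) (hf1 : f 1 = 0) :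
    cfc f p = 0 := by
  rw [cfc_congr (g := 0), cfc_zero]
  intro x hx
  rcases hp.spectrum_subset ℝ hx with rfl | rfl <;> simpa

namespace Matrix

variable {m n K : Type*} [Fintype n]

theorem rank_add_le [Field K] (A B : Matrix m n K) : (A + B).rank ≤ A.rank + B.rank := by
  have hrange : LinearMap.range (A + B).mulVecLin ≤
      LinearMap.range A.mulVecLin ⊔ LinearMap.range B.mulVecLin := by
    rintro _ ⟨x, rfl⟩
    rw [mulVecLin_add]
    exact Submodule.add_mem_sup ⟨x, rfl⟩ ⟨x, rfl⟩
  exact (Submodule.finrank_mono hrange).trans (Submodule.finrank_add_le_finrank_add_finrank _ _)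

theorem trace_eq_rank_of_isIdempotentElem [Field K] [DecidableEq n] {A : Matrix n n K}
    (hA : IsIdempotentElem A) : A.trace = A.rank := by
  rw [← trace_toLin'_eq]
  exact (LinearMap.IsIdempotentElem.isProj_range _ (hA.map toLinAlgEquiv')).trace

theorem IsHermitian.trace_cfc {𝕜 : Type*} [RCLike 𝕜] [DecidableEq n] {A : Matrix n n 𝕜}
    (hA : A.IsHermitian) (f : ℝ → ℝ) :
    (cfc f A).trace = ∑ i, (f (hA.eigenvalues i) : 𝕜) := by
  rw [hA.cfc_eq, IsHermitian.cfc, Unitary.conjStarAlgAut_apply, trace_mul_cycle,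
    Unitary.coe_star_mul_self, one_mul, trace_diagonal]
  rfl

theorem trace_sq_half_smul_add [DecidableEq n] [Field K] [CharZero K] {P Q : Matrix n n K}
    (hP : IsIdempotentElem P) (hQ : IsIdempotentElem Q) :
    (((1 / 2 : K) • (P + Q)) ^ 2).trace = (P.trace + Q.trace + 2 * (P * Q).trace) / 4 := by
  rw [sq, smul_mul_smul, add_mul, mul_add, mul_add, hP.eq, hQ.eq, trace_smul, trace_add,
    trace_add, trace_add, trace_mul_comm Q P, smul_eq_mul]
  field_simp
  ring

end Matrix

lemma exists_sum_comp_eq_add_of_card_support_le_two {ι α M : Type*} [Fintype ι] [Zero α]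
    [DecidableEq α] [AddCommMonoid M] {μ : ι → α} (h : Fintype.card {i // μ i ≠ 0} ≤ 2) :
    ∃ a b : α, ∀ g : α → M, g 0 = 0 → ∑ i, g (μ i) = g a + g b := by
  classical
  rw [Fintype.card_subtype] at h
  set s := Finset.univ.filter (μ · ≠ 0)
  have hs : ∀ g : α → M, g 0 = 0 → ∑ i, g (μ i) = ∑ i ∈ s, g (μ i) := fun g hg =>
    (Finset.sum_filter_of_ne (p := (μ · ≠ 0)) fun i _ hgi hμ => hgi (by rw [hμ, hg])).symm
  obtain h | h | h : s.card = 0 ∨ s.card = 1 ∨ s.card = 2 := by omega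
  · refine ⟨0, 0, fun g hg => ?_⟩
    simp [hs g hg, Finset.card_eq_zero.mp h, hg]
  · obtain ⟨i, hi⟩ := Finset.card_eq_one.mp h
    exact ⟨μ i, 0, fun g hg => by simp [hs g hg, hi, hg]⟩
  · obtain ⟨i, j, hij, hs_eq⟩ := Finset.card_eq_two.mp h
    exact ⟨μ i, μ j, fun g hg => by rw [hs g hg, hs_eq, Finset.sum_pair hij]⟩

lemma apply_add_apply_eq_of_add_eq_one_of_sq_add_sq {a b t : ℝ} (hab : a + b = 1)
    (hsq : a ^ 2 + b ^ 2 = (1 + t) / 2) (g : ℝ → ℝ) :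
    g a + g b = g ((1 + √t) / 2) + g ((1 - √t) / 2) := by
  have ht : √t = |a - b| := by rw [show t = (a - b) ^ 2 by nlinarith, Real.sqrt_sq_eq_abs]
  rcases le_total b a with h | h
  · rw [ht, abs_of_nonneg (sub_nonneg.2 h)]
    congr 2 <;> linarith
  · rw [ht, abs_of_nonpos (sub_nonpos.2 h), add_comm]
    congr 2 <;> linarith

lemma matFun_eq_cfc {n : ℕ} (f : ℝ → ℝ) {A : Matrix (Fin n) (Fin n) ℂ}
    (hA : A.IsHermitian) : matFun f A = cfc f A := by
  rw [matFun, dif_pos hA, hA.cfc_eq, IsHermitian.cfc, Unitary.conjStarAlgAut_apply]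
  rfl

theorem jensen_rankOne_projections_general {n : ℕ} (f : ℝ → ℝ)
    (hf0 : f 0 = 0) (hf1 : f 1 = 0)
    (P Q : Matrix (Fin n) (Fin n) ℂ) (hP : IsRankOneProj P) (hQ : IsRankOneProj Q) :
    jensen f P Q =
      -(f ((1 + Real.sqrt (((P * Q).trace).re)) / 2) +
        f ((1 - Real.sqrt (((P * Q).trace).re)) / 2)) := by
  obtain ⟨hPh, hPi, hPr⟩ := hP
  obtain ⟨hQh, hQi, hQr⟩ := hQ
  set M := (1 / 2 : ℂ) • (P + Q)
  have hM : M.IsHermitian := (hPh.add hQh).smul (by simp [IsSelfAdjoint])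
  have htrP : P.trace = 1 := by simp [trace_eq_rank_of_isIdempotentElem hPi, hPr]
  have htrQ : Q.trace = 1 := by simp [trace_eq_rank_of_isIdempotentElem hQi, hQr]
  have hrank : Fintype.card {i // hM.eigenvalues i ≠ 0} ≤ 2 := by
    rw [← hM.rank_eq_card_non_zero_eigs,
      rank_smul_of_mem_nonZeroDivisors _ (mem_nonZeroDivisors_of_ne_zero (by norm_num))]
    exact (rank_add_le P Q).trans (by omega)
  obtain ⟨a, b, hab⟩ := exists_sum_comp_eq_add_of_card_support_le_two (M := ℝ) hrank
  have htr : ∀ g : ℝ → ℝ, g 0 = 0 → (cfc g M).trace.re = g a + g b := fun g hg => by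
    rw [hM.trace_cfc, ← hab g hg, Complex.re_sum]
    simp only [← RCLike.re_to_complex, RCLike.ofReal_re]
  have hsum : a + b = 1 := by
    rw [← htr (fun x => x) rfl, cfc_id' ℝ M hM.isSelfAdjoint, trace_smul, trace_add, htrP, htrQ]
    norm_num
  have hsq : a ^ 2 + b ^ 2 = (1 + ((P * Q).trace).re) / 2 := by
    rw [← htr (· ^ 2) (by simp), cfc_pow_id M 2 hM.isSelfAdjoint, trace_sq_half_smul_add hPi hQi,
      htrP, htrQ, show (1 + 1 + 2 * (P * Q).trace) / 4 = (1 + (P * Q).trace) / 2 by ring]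
    simp
  have hjensen : jensen f P Q = -(cfc f M).trace.re := by
    rw [jensen, matFun_eq_cfc f hPh, matFun_eq_cfc f hQh, matFun_eq_cfc f hM,
      cfc_eq_zero_of_isIdempotentElem hPi hf0 hf1, cfc_eq_zero_of_isIdempotentElem hQi hf0 hf1]
    simp
  rw [hjensen, htr f hf0, apply_add_apply_eq_of_add_eq_one_of_sq_add_sq hsum hsq]

/-- Jensen divergence between two rank-one projections. -/
theorem jensen_rankOne_projections {n : ℕ} (f : ℝ → ℝ)
    (hconv : StrictConvexOn ℝ (Set.Ici 0) f)
    (hcont : ContinuousOn f (Set.Ici 0))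
    (hf0 : f 0 = 0) (hf1 : f 1 = 0)
    (P Q : Matrix (Fin n) (Fin n) ℂ) (hP : IsRankOneProj P) (hQ : IsRankOneProj Q) :
    jensen f P Q =
      -(f ((1 + Real.sqrt (((P * Q).trace).re)) / 2) +
        f ((1 - Real.sqrt (((P * Q).trace).re)) / 2)) :=
  jensen_rankOne_projections_general f hf0 hf1 P Q hP hQ
end

section
/- Let f be strictly convex on (0,∞). Then for fixed positive definite B, the map A ↦ H_f(A,B) = tr(f(A) − f(B) − f'(B)(A−B)) is strictly convex on positive definite operators; consequently, if ρ = Σ_{j=1}^k λ_j P_j with k ≥ 2 distinct rank-one projections P_j, λ_j > 0, Σλ_j = 1, then for any positive definite D, H_f(ρ, D) < Σ_{j=1}^k λ_j H_f(P_j, D). -/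
open Matrix
open scoped ComplexOrder

/-!
Write `T(A) = ∑ᵢ f(λᵢ(A)) = re tr f(A)`; the other terms of `H_f(·, B)` are affine in the first
argument, so everything is about `T`.

Schur–Peierls: if `M ⪰ 0` has eigenvector unitary `V`, then `Mᵢᵢ = ∑ⱼ |Vᵢⱼ|² λⱼ(M)` with
`(|Vᵢⱼ|²)` doubly stochastic, so Jensen gives `∑ᵢ f(Mᵢᵢ) ≤ T(M)`, and for strictly convex `f`
equality forces `M` to be diagonal. In the eigenbasis of `A = t A₁ + (1 - t) A₂` the eigenvalues
of `A` are `t (A₁)ᵢᵢ + (1 - t) (A₂)ᵢᵢ`, so Jensen followed by Schur–Peierls gives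
`T(A) ≤ t T(A₁) + (1 - t) T(A₂)`; equality would make `A₁` and `A₂` diagonal in that basis with
equal diagonals.

For `ρ = ∑ⱼ λⱼ Pⱼ`, in the eigenbasis `(uᵢ)` of `ρ` the eigenvalues are `∑ⱼ sᵢⱼ λⱼ` with
`sᵢⱼ = ⟨uᵢ, Pⱼ uᵢ⟩`, whose columns sum to `tr Pⱼ = 1` and rows to at most `1` because `1 - ∑ Pⱼ`
is a projection. Jensen with the missing mass at `0` gives `T(ρ) ≤ ∑ⱼ f(λⱼ) + (n - k) f(0)`,
while `T(Pⱼ) = f(1) + (n - 1) f(0)` and `f(λⱼ) < λⱼ f(1) + (1 - λⱼ) f(0)` as `0 < λⱼ < 1`.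
-/

open Finset

theorem ConvexOn.map_sum_mul_le_add {κ : Type*} [Fintype κ] {f : ℝ → ℝ}
    (hf : ConvexOn ℝ (Set.Ici 0) f) {s x : κ → ℝ} (hs : ∀ j, 0 ≤ s j) (hs₁ : ∑ j, s j ≤ 1)
    (hx : ∀ j, 0 ≤ x j) :
    f (∑ j, s j * x j) ≤ ∑ j, s j * f (x j) + (1 - ∑ j, s j) * f 0 := by
  have := hf.map_sum_le (t := univ) (w := fun o : Option κ => o.elim (1 - ∑ j, s j) s)
    (p := fun o : Option κ => o.elim 0 x) (by simp [Option.forall, hs, hs₁])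
    (by simp [Fintype.sum_option]) (by simp [Option.forall, hx])
  simpa [Fintype.sum_option, add_comm] using this

theorem ConvexOn.sum_map_sum_mul_le {ι κ : Type*} [Fintype ι] [Fintype κ] {f : ℝ → ℝ}
    (hf : ConvexOn ℝ (Set.Ici 0) f) {s : ι → κ → ℝ} {x : κ → ℝ} (hs : ∀ i j, 0 ≤ s i j)
    (hrow : ∀ i, ∑ j, s i j ≤ 1) (hcol : ∀ j, ∑ i, s i j = 1) (hx : ∀ j, 0 ≤ x j) :
    ∑ i, f (∑ j, s i j * x j) ≤
      ∑ j, f (x j) + (Fintype.card ι - Fintype.card κ) * f 0 := by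
  calc ∑ i, f (∑ j, s i j * x j)
      ≤ ∑ i, (∑ j, s i j * f (x j) + (1 - ∑ j, s i j) * f 0) :=
        sum_le_sum fun i _ => hf.map_sum_mul_le_add (hs i) (hrow i) hx
    _ = ∑ j, f (x j) + (Fintype.card ι - Fintype.card κ) * f 0 := by
        rw [sum_add_distrib, sum_comm, ← sum_mul, sum_sub_distrib, sum_comm (f := s)]
        simp [← sum_mul, hcol]

theorem StrictConvexOn.eq_of_sum_map_sum_mul_ge {ι κ : Type*} [Fintype ι] [Fintype κ]
    {f : ℝ → ℝ} (hf : StrictConvexOn ℝ (Set.Ici 0) f) {s : ι → κ → ℝ} {x : κ → ℝ}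
    (hs : ∀ i j, 0 ≤ s i j) (hrow : ∀ i, ∑ j, s i j = 1) (hcol : ∀ j, ∑ i, s i j = 1)
    (hx : ∀ j, 0 ≤ x j) (h : ∑ j, f (x j) ≤ ∑ i, f (∑ j, s i j * x j)) {i : ι} {j : κ}
    (hij : s i j ≠ 0) : x j = ∑ j, s i j * x j := by
  have hjensen (i : ι) : f (∑ j, s i j * x j) ≤ ∑ j, s i j * f (x j) := by
    simpa using hf.convexOn.map_sum_le (t := univ) (fun j _ => hs i j) (hrow i) (fun j _ => hx j)
  have hsum : ∑ i, ∑ j, s i j * f (x j) = ∑ j, f (x j) := by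
    rw [sum_comm]
    simp [← sum_mul, hcol]
  have heq := (sum_eq_sum_iff_of_le fun i _ => hjensen i).1
    (le_antisymm (sum_le_sum fun i _ => hjensen i) (hsum ▸ h)) i (mem_univ i)
  simpa using (hf.map_sum_eq_iff' (t := univ) (fun j _ => hs i j) (hrow i)
    (fun j _ => hx j)).1 (by simpa using heq) j (mem_univ j) hij

theorem Fintype.sum_comp_single_one {m : Type*} [Fintype m] [DecidableEq m] (g : ℝ → ℝ)
    (i₀ : m) :
    ∑ i, g (Pi.single (M := fun _ => ℝ) i₀ 1 i) = g 1 + (Fintype.card m - 1) * g 0 := by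
  rw [← add_sum_erase univ _ (mem_univ i₀),
    Finset.sum_congr rfl fun i (hi : i ∈ univ.erase i₀) => by
      rw [Pi.single_eq_of_ne (ne_of_mem_erase hi)]]
  simp [card_erase_of_mem (mem_univ i₀), Nat.cast_sub (Fintype.card_pos_iff.2 ⟨i₀⟩ : 1 ≤ _)]

namespace Matrix
variable {m : Type*}

theorem PosSemidef.re_apply_self_nonneg {A : Matrix m m ℂ} (hA : A.PosSemidef) (i : m) :
    0 ≤ (A i i).re := by
  simpa using (Complex.le_def.1 hA.diag_nonneg).1

theorem convex_setOf_posSemidef : Convex ℝ {A : Matrix m m ℂ | A.PosSemidef} :=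
  fun _ hA _ hB _ _ ha hb _ => (hA.smul ha).add (hB.smul hb)

theorem IsHermitian.posSemidef_of_isIdempotentElem [Fintype m] {R : Type*} [Ring R]
    [PartialOrder R] [StarRing R] [StarOrderedRing R] {A : Matrix m m R} (hA : A.IsHermitian)
    (h : IsIdempotentElem A) : A.PosSemidef := by
  simpa [hA.eq, h.eq] using posSemidef_conjTranspose_mul_self A

variable [Fintype m] [DecidableEq m]

theorem map_normSq_mem_doublyStochastic {U : Matrix m m ℂ} (hU : U ∈ unitaryGroup m ℂ) :
    U.map Complex.normSq ∈ doublyStochastic ℝ m := by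
  refine mem_doublyStochastic_iff_sum.2 ⟨fun i j => Complex.normSq_nonneg _, fun i => ?_,
    fun j => ?_⟩
  · have := congrArg (fun M => (M i i).re) (mem_unitaryGroup_iff.1 hU)
    simpa [mul_apply, Complex.mul_conj] using this
  · have := congrArg (fun M => (M j j).re) (mem_unitaryGroup_iff'.1 hU)
    simpa [mul_apply, Complex.mul_conj, mul_comm] using this

namespace IsHermitian
variable {A : Matrix m m ℂ}

theorem apply_eq_sum_eigenvalues (hA : A.IsHermitian) (i k : m) :
    A i k = ∑ j, hA.eigenvectorUnitary i j * hA.eigenvalues j *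
      star (hA.eigenvectorUnitary k j) := by
  conv_lhs => rw [hA.spectral_theorem, Unitary.conjStarAlgAut_apply, mul_apply]
  simp [mul_diagonal]

theorem re_apply_self_eq_sum_normSq_mul_eigenvalues (hA : A.IsHermitian) (i : m) :
    (A i i).re = ∑ j, Complex.normSq (hA.eigenvectorUnitary i j) * hA.eigenvalues j := by
  rw [hA.apply_eq_sum_eigenvalues, Complex.re_sum]
  refine sum_congr rfl fun j _ => ?_
  rw [mul_right_comm, RCLike.star_def, Complex.mul_conj]
  simp

theorem eigenvalues_star_mul_mul (hA : A.IsHermitian) {U : Matrix m m ℂ}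
    (hU : U ∈ unitaryGroup m ℂ) (h : (star U * A * U).IsHermitian) :
    h.eigenvalues = hA.eigenvalues := by
  rw [h.eigenvalues_eq_eigenvalues_iff, charpoly_mul_comm, ← Matrix.mul_assoc,
    mem_unitaryGroup_iff.1 hU, Matrix.one_mul]

theorem star_eigenvectorUnitary_mul_mul_apply_self (hA : A.IsHermitian) (i : m) :
    (star (hA.eigenvectorUnitary : Matrix m m ℂ) * A * hA.eigenvectorUnitary) i i =
      hA.eigenvalues i := by
  have := congrFun (congrFun hA.conjStarAlgAut_star_eigenvectorUnitary i) i
  simpa using this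

end IsHermitian

namespace PosSemidef
variable {A : Matrix m m ℂ} {f : ℝ → ℝ}

theorem sum_map_re_diag_le (hf : ConvexOn ℝ (Set.Ici 0) f) (hA : A.PosSemidef) :
    ∑ i, f (A i i).re ≤ ∑ i, f (hA.1.eigenvalues i) := by
  have hS := map_normSq_mem_doublyStochastic hA.1.eigenvectorUnitary.2
  simp_rw [hA.1.re_apply_self_eq_sum_normSq_mul_eigenvalues]
  simpa using hf.sum_map_sum_mul_le (fun _ _ => nonneg_of_mem_doublyStochastic hS)
    (fun i => (sum_row_of_mem_doublyStochastic hS i).le) (sum_col_of_mem_doublyStochastic hS)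
    hA.eigenvalues_nonneg

theorem isDiag_of_sum_map_eigenvalues_le (hf : StrictConvexOn ℝ (Set.Ici 0) f)
    (hA : A.PosSemidef) (h : ∑ i, f (hA.1.eigenvalues i) ≤ ∑ i, f (A i i).re) : A.IsDiag := by
  set U := hA.1.eigenvectorUnitary
  have hS := map_normSq_mem_doublyStochastic U.2
  intro i k hik
  have heig (j : m) (hj : U i j ≠ 0) : (hA.1.eigenvalues j : ℂ) = (A i i).re := by
    rw [hA.1.re_apply_self_eq_sum_normSq_mul_eigenvalues]
    simp_rw [hA.1.re_apply_self_eq_sum_normSq_mul_eigenvalues] at h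
    exact congrArg _ <| hf.eq_of_sum_map_sum_mul_ge
      (fun _ _ => nonneg_of_mem_doublyStochastic hS) (sum_row_of_mem_doublyStochastic hS)
      (sum_col_of_mem_doublyStochastic hS) hA.eigenvalues_nonneg h
      (by simpa using hj)
  calc A i k = ∑ j, U i j * hA.1.eigenvalues j * star (U k j) :=
        hA.1.apply_eq_sum_eigenvalues i k
    _ = ∑ j, (A i i).re * (U i j * star (U k j)) := sum_congr rfl fun j _ => by
        by_cases hj : U i j = 0
        · simp [hj]
        · rw [heig j hj]; ring
    _ = (A i i).re * (U * star U : Matrix m m ℂ) i k := by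
        rw [← mul_sum, mul_apply]; simp
    _ = 0 := by rw [Unitary.coe_mul_star_self, one_apply_ne hik, mul_zero]

theorem sum_map_add_re_diag_lt_of_ne (hf : StrictConvexOn ℝ (Set.Ici 0) f)
    {B : Matrix m m ℂ} (hA : A.PosSemidef) (hB : B.PosSemidef) (hne : A ≠ B) {a b : ℝ}
    (ha : 0 < a) (hb : 0 < b) (hab : a + b = 1) :
    ∑ i, f (a * (A i i).re + b * (B i i).re) <
      a * ∑ i, f (hA.1.eigenvalues i) + b * ∑ i, f (hB.1.eigenvalues i) := by
  have hjensen (i : m) : f (a * (A i i).re + b * (B i i).re) ≤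
      a * f (A i i).re + b * f (B i i).re :=
    hf.convexOn.2 (hA.re_apply_self_nonneg i) (hB.re_apply_self_nonneg i) ha.le hb.le hab
  have hsum : ∑ i, (a * f (A i i).re + b * f (B i i).re) =
      a * ∑ i, f (A i i).re + b * ∑ i, f (B i i).re := by
    rw [sum_add_distrib, mul_sum, mul_sum]
  have hschurA := mul_le_mul_of_nonneg_left (hA.sum_map_re_diag_le hf.convexOn) ha.le
  have hschurB := mul_le_mul_of_nonneg_left (hB.sum_map_re_diag_le hf.convexOn) hb.le
  by_contra! hge
  have hle := sum_le_sum fun i (_ : i ∈ univ) => hjensen i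
  have hdiagA := hA.isDiag_of_sum_map_eigenvalues_le hf (le_of_mul_le_mul_left (by linarith) ha)
  have hdiagB := hB.isDiag_of_sum_map_eigenvalues_le hf (le_of_mul_le_mul_left (by linarith) hb)
  have hterm := (sum_eq_sum_iff_of_le fun i (_ : i ∈ univ) => hjensen i).1 (by linarith)
  have hre (i : m) : (A i i).re = (B i i).re := by
    by_contra hi
    have := hf.2 (hA.re_apply_self_nonneg i) (hB.re_apply_self_nonneg i) hi ha hb hab
    simp only [smul_eq_mul] at this
    exact this.ne (hterm i (mem_univ i))
  refine hne ?_
  rw [← hdiagA.diagonal_diag, ← hdiagB.diagonal_diag]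
  congr 1
  ext i
  rw [diag_apply, diag_apply, ← hA.1.coe_re_apply_self, ← hB.1.coe_re_apply_self]
  exact congrArg _ (hre i)

end PosSemidef

theorem IsHermitian.sum_map_eigenvalues_sum_smul_le {κ : Type*} [Fintype κ] {f : ℝ → ℝ}
    (hf : ConvexOn ℝ (Set.Ici 0) f) {P : κ → Matrix m m ℂ} (hP : ∀ j, (P j).PosSemidef)
    (htr : ∀ j, (P j).trace = 1) (hsum : (1 - ∑ j, P j).PosSemidef) {w : κ → ℝ}
    (hw : ∀ j, 0 ≤ w j) (hρ : (∑ j, (w j : ℂ) • P j).IsHermitian) :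
    ∑ i, f (hρ.eigenvalues i) ≤
      ∑ j, f (w j) + (Fintype.card m - Fintype.card κ) * f 0 := by
  set U : Matrix m m ℂ := (hρ.eigenvectorUnitary : Matrix m m ℂ)
  have hU : U ∈ unitaryGroup m ℂ := hρ.eigenvectorUnitary.2
  have hUU : Uᴴ * U = 1 := mem_unitaryGroup_iff'.1 hU
  have hUU' : U * Uᴴ = 1 := mem_unitaryGroup_iff.1 hU
  set s : m → κ → ℝ := fun i j => ((Uᴴ * P j * U) i i).re
  have hs (i : m) (j : κ) : 0 ≤ s i j :=
    ((hP j).conjTranspose_mul_mul_same U).re_apply_self_nonneg i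
  have hcol (j : κ) : ∑ i, s i j = 1 := by
    simp only [s, ← Complex.re_sum]
    change (trace (Uᴴ * P j * U)).re = 1
    rw [trace_mul_cycle, hUU', Matrix.one_mul, htr, Complex.one_re]
  have hrow (i : m) : ∑ j, s i j ≤ 1 := by
    have := (hsum.conjTranspose_mul_mul_same U).re_apply_self_nonneg i
    simpa [Matrix.mul_sub, Matrix.sub_mul, hUU, Matrix.mul_sum, Matrix.sum_mul, sum_apply, s]
      using this
  have heig (i : m) : hρ.eigenvalues i = ∑ j, s i j * w j := by
    have := congrArg Complex.re (hρ.star_eigenvectorUnitary_mul_mul_apply_self i)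
    simpa [U, s, star_eq_conjTranspose, Matrix.mul_sum, Matrix.sum_mul, sum_apply, mul_comm]
      using this.symm
  simp only [heig]
  exact hf.sum_map_sum_mul_le hs hrow hcol hw

end Matrix

section
variable {n : ℕ} {f : ℝ → ℝ}

theorem re_trace_matFun {A : Matrix (Fin n) (Fin n) ℂ} (hA : A.IsHermitian) :
    (matFun f A).trace.re = ∑ i, f (hA.eigenvalues i) := by
  rw [matFun, dif_pos hA, trace_mul_cycle, Unitary.coe_star_mul_self, Matrix.one_mul]
  simp [trace_diagonal]

theorem strictConvexOn_re_trace_matFun (hf : StrictConvexOn ℝ (Set.Ici 0) f) :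
    StrictConvexOn ℝ {A : Matrix (Fin n) (Fin n) ℂ | A.PosSemidef}
      (fun A => (matFun f A).trace.re) := by
  refine ⟨convex_setOf_posSemidef, fun A₁ h₁ A₂ h₂ hne a b ha hb hab => ?_⟩
  have h : (a • A₁ + b • A₂).PosSemidef := convex_setOf_posSemidef h₁ h₂ ha.le hb.le hab
  set U : Matrix (Fin n) (Fin n) ℂ := (h.1.eigenvectorUnitary : Matrix (Fin n) (Fin n) ℂ)
  have hU : U ∈ unitaryGroup (Fin n) ℂ := h.1.eigenvectorUnitary.2
  have hM₁ : (star U * A₁ * U).PosSemidef := h₁.conjTranspose_mul_mul_same U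
  have hM₂ : (star U * A₂ * U).PosSemidef := h₂.conjTranspose_mul_mul_same U
  have hconj (A : Matrix (Fin n) (Fin n) ℂ) : U * (star U * A * U) * star U = A := by
    rw [Matrix.mul_assoc, Matrix.mul_assoc, mem_unitaryGroup_iff.1 hU, Matrix.mul_one,
      ← Matrix.mul_assoc, mem_unitaryGroup_iff.1 hU, Matrix.one_mul]
  have hM : star U * A₁ * U ≠ star U * A₂ * U := fun heq => hne <| by
    rw [← hconj A₁, heq, hconj]
  have heig (i : Fin n) :
      h.1.eigenvalues i = a * ((star U * A₁ * U) i i).re + b * ((star U * A₂ * U) i i).re := by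
    have := congrArg Complex.re (h.1.star_eigenvectorUnitary_mul_mul_apply_self i)
    simpa [U, Matrix.mul_add, Matrix.add_mul] using this.symm
  show (matFun f (a • A₁ + b • A₂)).trace.re <
    a * (matFun f A₁).trace.re + b * (matFun f A₂).trace.re
  rw [re_trace_matFun h.1, re_trace_matFun h₁.1, re_trace_matFun h₂.1,
    ← h₁.1.eigenvalues_star_mul_mul hU hM₁.1, ← h₂.1.eigenvalues_star_mul_mul hU hM₂.1]
  simp only [heig]
  exact PosSemidef.sum_map_add_re_diag_lt_of_ne hf hM₁ hM₂ hM ha hb hab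

namespace IsRankOneProj
variable {P : Matrix (Fin n) (Fin n) ℂ}

theorem exists_eigenvalues_eq_single (hP : IsRankOneProj P) :
    ∃ i₀, hP.1.eigenvalues = Pi.single i₀ 1 := by
  have h01 (i : Fin n) : hP.1.eigenvalues i = 0 ∨ hP.1.eigenvalues i = 1 := by
    have := IsIdempotentElem.spectrum_subset ℝ hP.2.1
      (hP.1.spectrum_real_eq_range_eigenvalues ▸ Set.mem_range_self i)
    simpa using this
  have hcard : Fintype.card {i // hP.1.eigenvalues i ≠ 0} = 1 := by
    rw [← hP.1.rank_eq_card_non_zero_eigs, hP.2.2]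
  obtain ⟨⟨i₀, hi₀⟩, huniq⟩ := Fintype.card_eq_one_iff.1 hcard
  refine ⟨i₀, funext fun i => ?_⟩
  by_cases hi : i = i₀
  · subst hi
    simpa [hi₀] using h01 i
  · rw [Pi.single_eq_of_ne hi]
    by_contra h
    exact hi (congrArg Subtype.val (huniq ⟨i, h⟩))

theorem re_trace_matFun (hP : IsRankOneProj P) (f : ℝ → ℝ) :
    (matFun f P).trace.re = f 1 + (n - 1) * f 0 := by
  obtain ⟨i₀, h⟩ := hP.exists_eigenvalues_eq_single
  rw [_root_.re_trace_matFun hP.1, h, Fintype.sum_comp_single_one, Fintype.card_fin]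

theorem trace_eq_one (hP : IsRankOneProj P) : P.trace = 1 := by
  obtain ⟨i₀, h⟩ := hP.exists_eigenvalues_eq_single
  simp [hP.1.trace_eq_sum_eigenvalues, h, Pi.single_apply]

theorem posSemidef (hP : IsRankOneProj P) : P.PosSemidef :=
  hP.1.posSemidef_of_isIdempotentElem hP.2.1

end IsRankOneProj

theorem re_trace_matFun_sum_smul_lt {κ : Type*} [Fintype κ] [Nontrivial κ]
    (hf : StrictConvexOn ℝ (Set.Ici 0) f) {P : κ → Matrix (Fin n) (Fin n) ℂ}
    (hP : ∀ j, IsRankOneProj (P j)) (horth : ∀ i j, i ≠ j → P i * P j = 0) {w : κ → ℝ}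
    (hw : ∀ j, 0 < w j) (hw₁ : ∑ j, w j = 1) :
    (matFun f (∑ j, (w j : ℂ) • P j)).trace.re < f 1 + (n - 1) * f 0 := by
  have hρ : (∑ j, (w j : ℂ) • P j).IsHermitian :=
    (posSemidef_sum univ fun j _ => (hP j).posSemidef.smul (by exact_mod_cast (hw j).le)).1
  have hQ : (1 - ∑ j, P j).PosSemidef :=
    (isHermitian_one.sub (posSemidef_sum univ fun j _ => (hP j).posSemidef).1)
      |>.posSemidef_of_isIdempotentElem
      (OrthogonalIdempotents.mk (fun j => (hP j).2.1) horth).isIdempotentElem_sum.one_sub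
  have hjensen (j : κ) : f (w j) < w j * f 1 + (1 - w j) * f 0 := by
    obtain ⟨j', hj'⟩ := exists_ne j
    have hlt : w j < 1 := hw₁ ▸ single_lt_sum hj' (mem_univ j) (mem_univ j') (hw j')
      fun k _ _ => (hw k).le
    simpa using hf.2 (x := 1) (y := 0) (by simp) (by simp) one_ne_zero (hw j) (sub_pos.2 hlt)
      (by ring)
  calc (matFun f (∑ j, (w j : ℂ) • P j)).trace.re = ∑ i, f (hρ.eigenvalues i) :=
        re_trace_matFun hρ
    _ ≤ ∑ j, f (w j) + (n - Fintype.card κ) * f 0 := by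
        simpa using hρ.sum_map_eigenvalues_sum_smul_le hf.convexOn (fun j => (hP j).posSemidef)
          (fun j => (hP j).trace_eq_one) hQ (fun j => (hw j).le)
    _ < ∑ j, (w j * f 1 + (1 - w j) * f 0) + (n - Fintype.card κ) * f 0 := by
        gcongr with j
        · exact univ_nonempty
        · exact hjensen j
    _ = f 1 + (n - 1) * f 0 := by
        simp only [sum_add_distrib, ← sum_mul, sum_sub_distrib, hw₁, sum_const, card_univ,
          nsmul_eq_mul, mul_one]
        ring

theorem bregman_eq (f : ℝ → ℝ) (A B : Matrix (Fin n) (Fin n) ℂ) :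
    bregman f A B = (matFun f A).trace.re - (matFun (deriv f) B * A).trace.re -
      ((matFun f B).trace.re - (matFun (deriv f) B * B).trace.re) := by
  simp only [bregman, Matrix.mul_sub, trace_sub, Complex.sub_re]
  ring

theorem strictConvexOn_bregman_fst (hf : StrictConvexOn ℝ (Set.Ici 0) f)
    (B : Matrix (Fin n) (Fin n) ℂ) :
    StrictConvexOn ℝ {A : Matrix (Fin n) (Fin n) ℂ | A.PosSemidef} (fun A => bregman f A B) := by
  have hlin : ConcaveOn ℝ {A : Matrix (Fin n) (Fin n) ℂ | A.PosSemidef}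
      (fun A => (matFun (deriv f) B * A).trace.re) :=
    ⟨convex_setOf_posSemidef, fun _ _ _ _ _ _ _ _ _ => le_of_eq (by
      simp [Matrix.mul_add, trace_add, trace_smul])⟩
  refine (((strictConvexOn_re_trace_matFun hf).sub_concaveOn hlin).add_const
    ((matFun (deriv f) B * B).trace.re - (matFun f B).trace.re)).congr fun A _ => ?_
  simp only [Pi.add_apply, Pi.sub_apply, bregman_eq]
  ring

theorem sum_mul_bregman_sub_bregman_sum {κ : Type*} [Fintype κ] (f : ℝ → ℝ) {w : κ → ℝ}
    (hw₁ : ∑ j, w j = 1) (A : κ → Matrix (Fin n) (Fin n) ℂ) (B : Matrix (Fin n) (Fin n) ℂ) :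
    ∑ j, w j * bregman f (A j) B - bregman f (∑ j, (w j : ℂ) • A j) B =
      ∑ j, w j * (matFun f (A j)).trace.re - (matFun f (∑ j, (w j : ℂ) • A j)).trace.re := by
  simp only [bregman_eq, Matrix.mul_sum, mul_smul_comm, trace_sum, trace_smul, Complex.re_sum,
    smul_eq_mul, Complex.re_ofReal_mul, mul_sub, sum_sub_distrib, ← sum_mul, hw₁]
  ring

end

theorem bregman_strictConvex_fst_general {n : ℕ} (f : ℝ → ℝ)
    (hconv : StrictConvexOn ℝ (Set.Ici 0) f) :
    (∀ (B : Matrix (Fin n) (Fin n) ℂ), B.PosDef →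
      ∀ (A₁ A₂ : Matrix (Fin n) (Fin n) ℂ), A₁.PosDef → A₂.PosDef → A₁ ≠ A₂ →
      ∀ t : ℝ, 0 < t → t < 1 →
        bregman f ((t : ℂ) • A₁ + ((1 - t : ℝ) : ℂ) • A₂) B <
          t * bregman f A₁ B + (1 - t) * bregman f A₂ B) ∧
    (∀ (k : ℕ), 2 ≤ k → ∀ (P : Fin k → Matrix (Fin n) (Fin n) ℂ),
      (∀ j, IsRankOneProj (P j)) → (∀ i j, i ≠ j → P i * P j = 0) →
      ∀ (w : Fin k → ℝ), (∀ j, 0 < w j) → (∑ j, w j = 1) →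
      ∀ (D : Matrix (Fin n) (Fin n) ℂ), D.PosDef →
        bregman f (∑ j, ((w j : ℂ)) • P j) D < ∑ j, w j * bregman f (P j) D) := by
  refine ⟨fun B _ A₁ A₂ h₁ h₂ hne t ht₀ ht₁ => ?_, fun k hk P hP horth w hw hw₁ D _ => ?_⟩
  · rw [Complex.coe_smul, Complex.coe_smul]
    exact (strictConvexOn_bregman_fst hconv B).2 h₁.posSemidef h₂.posSemidef hne ht₀
      (sub_pos.2 ht₁) (by ring)
  · have : Nontrivial (Fin k) := Fin.nontrivial_iff_two_le.2 hk
    rw [← sub_pos, sum_mul_bregman_sub_bregman_sum f hw₁,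
      sum_congr rfl fun j _ => by rw [(hP j).re_trace_matFun f], ← sum_mul, hw₁, one_mul, sub_pos]
    exact re_trace_matFun_sum_smul_lt hconv hP horth hw hw₁

/-- strict convexity of `A ↦ H_f(A,B)` and the resulting strict
Jensen inequality for a mixed state `ρ = Σ λ_j P_j`. -/
theorem bregman_strictConvex_fst {n : ℕ} (f : ℝ → ℝ)
    (hconv : StrictConvexOn ℝ (Set.Ici 0) f)
    (hdiff : ∀ x ∈ Set.Ioi (0 : ℝ), DifferentiableAt ℝ f x) :
    (∀ (B : Matrix (Fin n) (Fin n) ℂ), B.PosDef →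
      ∀ (A₁ A₂ : Matrix (Fin n) (Fin n) ℂ), A₁.PosDef → A₂.PosDef → A₁ ≠ A₂ →
      ∀ t : ℝ, 0 < t → t < 1 →
        bregman f ((t : ℂ) • A₁ + ((1 - t : ℝ) : ℂ) • A₂) B <
          t * bregman f A₁ B + (1 - t) * bregman f A₂ B) ∧
    (∀ (k : ℕ), 2 ≤ k → ∀ (P : Fin k → Matrix (Fin n) (Fin n) ℂ),
      (∀ j, IsRankOneProj (P j)) → (∀ i j, i ≠ j → P i * P j = 0) →
      ∀ (w : Fin k → ℝ), (∀ j, 0 < w j) → (∑ j, w j = 1) →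
      ∀ (D : Matrix (Fin n) (Fin n) ℂ), D.PosDef →
        bregman f (∑ j, ((w j : ℂ)) • P j) D < ∑ j, w j * bregman f (P j) D) :=
  bregman_strictConvex_fst_general f hconv
end
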